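/- Let n ≥ 2, let I ⊆ ℝ be an interval, let φ, ψ : I → ℝ be continuous and strictly monotone, and let p₁,…,pₙ > 0 with p₁+…+pₙ = 1. Then the weighted quasiarithmetic means A_p^{[ψ]} and A_p^{[φ]} coincide (as functions on Iⁿ) if and only if there exist real numbers a, b with a ≠ 0 such that ψ = a·φ + b on I. -/

import Mathlib

/-!
Evaluating both means at a two-point vector `(u, v, …, v)` shows that the curve
`c ↦ (φ c, ψ c)` is closed under the convex combination with weight `q = p₁ ∈ (0, 1)`.
Between two points `s < t` the set of parameters where the curve lies on the chord through
`s` and `t` is therefore closed and has no gaps (the combination lands strictly in between, by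
monotonicity of `φ`), so it is all of `[s, t]`. Hence the curve is a line segment, i.e. `ψ` is
an affine function of `φ`.
-/

open Set Function

theorem IsClosed.Icc_subset_of_exists_between {α : Type*} [ConditionallyCompleteLinearOrder α]
    [TopologicalSpace α] [OrderTopology α] {S : Set α} (hS : IsClosed S) {s t : α}
    (hs : s ∈ S) (ht : t ∈ S) (hbetween : ∀ a ∈ S, ∀ b ∈ S, a < b → ∃ c ∈ S, a < c ∧ c < b) :
    Icc s t ⊆ S := by
  intro c hc
  by_contra hcS
  have hAbdd : BddAbove (S ∩ Icc s c) := bddAbove_Icc.mono inter_subset_right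
  have hBbdd : BddBelow (S ∩ Icc c t) := bddBelow_Icc.mono inter_subset_right
  have hA : sSup (S ∩ Icc s c) ∈ S ∩ Icc s c :=
    (hS.inter isClosed_Icc).csSup_mem ⟨s, hs, le_rfl, hc.1⟩ hAbdd
  have hB : sInf (S ∩ Icc c t) ∈ S ∩ Icc c t :=
    (hS.inter isClosed_Icc).csInf_mem ⟨t, ht, hc.2, le_rfl⟩ hBbdd
  have hAc : sSup (S ∩ Icc s c) < c := hA.2.2.lt_of_ne fun h => hcS (h ▸ hA.1)
  have hcB : c < sInf (S ∩ Icc c t) := hB.2.1.lt_of_ne' fun h => hcS (h ▸ hB.1)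
  obtain ⟨γ, hγ, hAγ, hγB⟩ := hbetween _ hA.1 _ hB.1 (hAc.trans hcB)
  rcases le_total γ c with hγc | hcγ
  · exact hAγ.not_ge (le_csSup hAbdd ⟨hγ, hA.2.1.trans hAγ.le, hγc⟩)
  · exact hγB.not_ge (csInf_le hBbdd ⟨hγ, hcγ, hγB.le.trans hB.2.2⟩)

section Curve

variable {I : Set ℝ} {φ ψ : ℝ → ℝ} {q : ℝ}

theorem StrictMonoOn.mem_Ioo_of_eq_convexCombo (hφ : StrictMonoOn φ I) {a b w : ℝ}
    (ha : a ∈ I) (hb : b ∈ I) (hw : w ∈ I) (hab : a < b) (hq0 : 0 < q) (hq1 : q < 1)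
    (hφw : φ w = q * φ b + (1 - q) * φ a) : w ∈ Ioo a b := by
  have hφab := hφ ha hb hab
  exact ⟨(hφ.lt_iff_lt ha hw).1 (by rw [hφw]; nlinarith),
    (hφ.lt_iff_lt hw hb).1 (by rw [hφw]; nlinarith)⟩

theorem mem_Ioo_of_eq_convexCombo (hφ : StrictMonoOn φ I ∨ StrictAntiOn φ I) {a b w : ℝ}
    (ha : a ∈ I) (hb : b ∈ I) (hw : w ∈ I) (hab : a < b) (hq0 : 0 < q) (hq1 : q < 1)
    (hφw : φ w = q * φ b + (1 - q) * φ a) : w ∈ Ioo a b := by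
  rcases hφ with hmono | hanti
  · exact hmono.mem_Ioo_of_eq_convexCombo ha hb hw hab hq0 hq1 hφw
  · refine hanti.neg.mem_Ioo_of_eq_convexCombo ha hb hw hab hq0 hq1 ?_
    simp only [hφw]
    ring

variable (hIc : I.OrdConnected) (hφ_cont : ContinuousOn φ I) (hψ_cont : ContinuousOn ψ I)
  (hφ_mono : StrictMonoOn φ I ∨ StrictAntiOn φ I) (hq0 : 0 < q) (hq1 : q < 1)
  (hmix : ∀ u ∈ I, ∀ v ∈ I, ∃ w ∈ I,
    φ w = q * φ u + (1 - q) * φ v ∧ ψ w = q * ψ u + (1 - q) * ψ v)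
include hIc hφ_cont hψ_cont hφ_mono hq0 hq1 hmix

theorem chord_eq_of_mem_Icc {s t : ℝ} (hs : s ∈ I) (ht : t ∈ I) :
    ∀ c ∈ Icc s t, (ψ t - ψ s) * (φ c - φ s) = (ψ c - ψ s) * (φ t - φ s) := by
  have hsub : Icc s t ⊆ I := hIc.out hs ht
  let S := Icc s t ∩ {c | (ψ t - ψ s) * (φ c - φ s) - (ψ c - ψ s) * (φ t - φ s) = 0}
  have hS : IsClosed S := by
    refine ContinuousOn.preimage_isClosed_of_isClosed ?_ isClosed_Icc isClosed_singleton
    exact (continuousOn_const.mul ((hφ_cont.mono hsub).sub continuousOn_const)).sub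
      (((hψ_cont.mono hsub).sub continuousOn_const).mul continuousOn_const)
  rcases lt_or_ge t s with hts | hst
  · simp [Icc_eq_empty_of_lt hts]
  have hbetween : ∀ a ∈ S, ∀ b ∈ S, a < b → ∃ c ∈ S, a < c ∧ c < b := by
    rintro a ⟨haIcc, ha⟩ b ⟨hbIcc, hb⟩ hab
    obtain ⟨w, hwI, hφw, hψw⟩ := hmix b (hsub hbIcc) a (hsub haIcc)
    obtain ⟨haw, hwb⟩ :=
      mem_Ioo_of_eq_convexCombo hφ_mono (hsub haIcc) (hsub hbIcc) hwI hab hq0 hq1 hφw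
    refine ⟨w, ⟨⟨haIcc.1.trans haw.le, hwb.le.trans hbIcc.2⟩, ?_⟩, haw, hwb⟩
    simp only [mem_ofPred_eq, hφw, hψw] at ha hb ⊢
    linear_combination q * hb + (1 - q) * ha
  intro c hc
  have hcS := IsClosed.Icc_subset_of_exists_between hS ⟨left_mem_Icc.2 hst, by simp⟩
    ⟨right_mem_Icc.2 hst, by simp only [mem_ofPred_eq]; ring⟩ hbetween hc
  exact sub_eq_zero.1 hcS.2

theorem exists_affine_of_convexCombo (hψ_inj : InjOn ψ I) :
    ∃ a b : ℝ, a ≠ 0 ∧ ∀ x ∈ I, ψ x = a * φ x + b := by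
  rcases I.subsingleton_or_nontrivial with hI | hI
  · rcases I.eq_empty_or_nonempty with rfl | ⟨c, hc⟩
    · exact ⟨1, 0, one_ne_zero, by simp⟩
    · refine ⟨1, ψ c - φ c, one_ne_zero, fun x hx => ?_⟩
      rw [hI hx hc]
      ring
  obtain ⟨u, hu, v, hv, huv⟩ := hI.exists_lt
  have hφ_inj : InjOn φ I := hφ_mono.elim (·.injOn) (·.injOn)
  have hφuv : φ v - φ u ≠ 0 := sub_ne_zero.2 fun h => huv.ne' (hφ_inj hv hu h)
  have hψuv : ψ v - ψ u ≠ 0 := sub_ne_zero.2 fun h => huv.ne' (hψ_inj hv hu h)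
  have chord {s t : ℝ} (hs : s ∈ I) (ht : t ∈ I) :=
    chord_eq_of_mem_Icc hIc hφ_cont hψ_cont hφ_mono hq0 hq1 hmix hs ht
  refine ⟨(ψ v - ψ u) / (φ v - φ u), ψ u - (ψ v - ψ u) / (φ v - φ u) * φ u,
    div_ne_zero hψuv hφuv, fun w hw => ?_⟩
  have hline : (ψ w - ψ u) * (φ v - φ u) = (ψ v - ψ u) * (φ w - φ u) := by
    rcases lt_or_ge w u with hwu | huw
    · linear_combination chord hw hv u ⟨hwu.le, huv.le⟩
    rcases le_or_gt w v with hwv | hvw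
    · linear_combination -chord hu hv w ⟨huw, hwv⟩
    · linear_combination chord hu hw v ⟨huv.le, hvw.le⟩
  field_simp
  linear_combination hline

end Curve

section QuasiArithMean

variable {ι : Type*} [Fintype ι] {I : Set ℝ} {φ ψ : ℝ → ℝ} {p : ι → ℝ}

/-- The paper's `A_p^{[φ]}`. -/
noncomputable def quasiArithMean (I : Set ℝ) (φ : ℝ → ℝ) (p : ι → ℝ) (x : ι → ℝ) : ℝ :=
  invFunOn φ I (∑ j, p j * φ (x j))

theorem sum_mul_mem_image (hIc : I.OrdConnected) (hφ : ContinuousOn φ I) (hp : ∀ j, 0 ≤ p j)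
    (hp1 : ∑ j, p j = 1) {x : ι → ℝ} (hx : ∀ j, x j ∈ I) : ∑ j, p j * φ (x j) ∈ φ '' I :=
  (hIc.isPreconnected.image φ hφ).ordConnected.convex.sum_mem (fun j _ => hp j) hp1
    fun j _ => mem_image_of_mem φ (hx j)

theorem lt_one_of_sum_eq_one (hp : ∀ j, 0 < p j) (hp1 : ∑ j, p j = 1) {i j : ι} (hij : j ≠ i) :
    p i < 1 :=
  hp1 ▸ Finset.single_lt_sum hij (Finset.mem_univ i) (Finset.mem_univ j) (hp j)
    fun k _ _ => (hp k).le

theorem sum_mul_update_const [DecidableEq ι] (hp1 : ∑ j, p j = 1) (χ : ℝ → ℝ) (i₀ : ι)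
    (u v : ℝ) :
    ∑ j, p j * χ (update (fun _ => v) i₀ u j) = p i₀ * χ u + (1 - p i₀) * χ v := by
  have hrest : ∑ j ∈ Finset.univ.erase i₀, p j = 1 - p i₀ := by
    rw [← hp1, ← Finset.add_sum_erase _ _ (Finset.mem_univ i₀), add_sub_cancel_left]
  rw [← Finset.add_sum_erase _ _ (Finset.mem_univ i₀), update_self, ← hrest, Finset.sum_mul]
  congr 1
  exact Finset.sum_congr rfl fun j hj => by rw [update_of_ne (Finset.ne_of_mem_erase hj)]

variable (hIc : I.OrdConnected) (hφ : ContinuousOn φ I) (hp : ∀ j, 0 ≤ p j)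
  (hp1 : ∑ j, p j = 1)
include hIc hφ hp hp1

theorem quasiArithMean_mem {x : ι → ℝ} (hx : ∀ j, x j ∈ I) : quasiArithMean I φ p x ∈ I :=
  invFunOn_mem (sum_mul_mem_image hIc hφ hp hp1 hx)

theorem apply_quasiArithMean {x : ι → ℝ} (hx : ∀ j, x j ∈ I) :
    φ (quasiArithMean I φ p x) = ∑ j, p j * φ (x j) :=
  invFunOn_eq (sum_mul_mem_image hIc hφ hp hp1 hx)

theorem quasiArithMean_eq_of_affine (hψ : InjOn ψ I) {a b : ℝ}
    (hab : ∀ x ∈ I, ψ x = a * φ x + b) {x : ι → ℝ} (hx : ∀ j, x j ∈ I) :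
    quasiArithMean I ψ p x = quasiArithMean I φ p x := by
  have hmem := quasiArithMean_mem hIc hφ hp hp1 hx
  have hsum : ∑ j, p j * ψ (x j) = ψ (quasiArithMean I φ p x) := by
    calc ∑ j, p j * ψ (x j) = a * ∑ j, p j * φ (x j) + b * ∑ j, p j := by
          simp only [Finset.mul_sum, ← Finset.sum_add_distrib]
          exact Finset.sum_congr rfl fun j _ => by rw [hab (x j) (hx j)]; ring
      _ = ψ (quasiArithMean I φ p x) := by
          rw [hab _ hmem, apply_quasiArithMean hIc hφ hp hp1 hx, hp1, mul_one]
  rw [quasiArithMean, hsum, hψ.leftInvOn_invFunOn hmem]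

theorem exists_convexCombo_of_quasiArithMean_eq [DecidableEq ι] (hψ : ContinuousOn ψ I)
    (hEq : ∀ x : ι → ℝ, (∀ j, x j ∈ I) → quasiArithMean I ψ p x = quasiArithMean I φ p x)
    (i₀ : ι) : ∀ u ∈ I, ∀ v ∈ I, ∃ w ∈ I,
      φ w = p i₀ * φ u + (1 - p i₀) * φ v ∧ ψ w = p i₀ * ψ u + (1 - p i₀) * ψ v := by
  intro u hu v hv
  set x := update (fun _ => v) i₀ u
  have hx : ∀ j, x j ∈ I := fun j => by
    rcases eq_or_ne j i₀ with rfl | hj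
    · simpa [x] using hu
    · simpa [x, hj] using hv
  refine ⟨quasiArithMean I φ p x, quasiArithMean_mem hIc hφ hp hp1 hx, ?_, ?_⟩
  · rw [apply_quasiArithMean hIc hφ hp hp1 hx, sum_mul_update_const hp1]
  · rw [← hEq x hx, apply_quasiArithMean hIc hψ hp hp1 hx, sum_mul_update_const hp1]

end QuasiArithMean

/-- Remark 4 of the paper, equality of generators. For `n ≥ 2`,
an interval `I ⊆ ℝ`, continuous strictly monotone `φ, ψ : I → ℝ` and weights
`p₁,…,pₙ > 0` summing to `1`, we have `A_p^{[ψ]} = A_p^{[φ]}` on `Iⁿ` iff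
`ψ = a·φ + b` on `I` for some `a ≠ 0` and `b`. -/
theorem stmt_10 (n : ℕ) (hn : 2 ≤ n) (I : Set ℝ) (hIc : I.OrdConnected)
    (φ ψ : ℝ → ℝ)
    (hφ_cont : ContinuousOn φ I) (hψ_cont : ContinuousOn ψ I)
    (hφ_mono : StrictMonoOn φ I ∨ StrictAntiOn φ I)
    (hψ_mono : StrictMonoOn ψ I ∨ StrictAntiOn ψ I)
    (p : Fin n → ℝ) (hp : ∀ j, 0 < p j) (hp1 : ∑ j, p j = 1) :
    (∀ x : Fin n → ℝ, (∀ j, x j ∈ I) →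
        invFunOn ψ I (∑ j, p j * ψ (x j)) = invFunOn φ I (∑ j, p j * φ (x j))) ↔
      ∃ a b : ℝ, a ≠ 0 ∧ ∀ x ∈ I, ψ x = a * φ x + b := by
  have hψ_inj : InjOn ψ I := hψ_mono.elim (·.injOn) (·.injOn)
  have hp_nonneg : ∀ j, 0 ≤ p j := fun j => (hp j).le
  constructor
  · intro hEq
    have hq1 : p ⟨0, by omega⟩ < 1 :=
      lt_one_of_sum_eq_one hp hp1 (j := ⟨1, by omega⟩) (by simp [Fin.ext_iff])
    exact exists_affine_of_convexCombo hIc hφ_cont hψ_cont hφ_mono (hp _) hq1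
      (exists_convexCombo_of_quasiArithMean_eq hIc hφ_cont hp_nonneg hp1 hψ_cont hEq _) hψ_inj
  · rintro ⟨a, b, -, hab⟩ x hx
    exact quasiArithMean_eq_of_affine hIc hφ_cont hp_nonneg hp1 hψ_inj hab hx
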